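/- Fix vectors a₂ ∈ ℝᵖ, a₃ ∈ ℝᵖ, a₄ ∈ ℝ^q, a₅ ∈ ℝ^q, a₁ ∈ ℝᵐ, scalars a₀, b, matrices Σ₁ (p×p), Σ₂L (q×q'), and η_max > 0. Consider variables (h, M̃, K̃, M̄, K̄, η) with η ∈ [0, η_max]. If both second-order-cone constraints a₀ + a₁ᵀh - b ≥ ‖(Σ₁(M̃ᵀa₂ + η a₃); Σ₂L(K̃ᵀa₄ + η a₅))‖ and a₀ + a₁ᵀh - b ≥ ‖(Σ₁(M̃ᵀa₂ + η_max M̄ᵀa₂ + η a₃); Σ₂L(K̃ᵀa₄ + η_max K̄ᵀa₄ + η a₅))‖ hold, then the constraint a₀ + a₁ᵀh - b ≥ ‖(Σ₁(M̃ᵀa₂ + η M̄ᵀa₂ + η a₃); Σ₂L(K̃ᵀa₄ + η K̄ᵀa₄ + η a₅))‖ also holds. -/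

import Mathlib

/-! After splitting off the bilinear term, both stacked vectors depend affinely
on the scalar `s` multiplying `M̄ᵀa₂` and `K̄ᵀa₄`, so the left-hand side is a convex function of `s`.
On `[0, η_max]` it is therefore bounded by its values at the endpoints, which are the two
second-order-cone constraints. -/

open Matrix

noncomputable def stackedNorm {p q : ℕ} (v : Fin p → ℝ) (w : Fin q → ℝ) : ℝ :=
  Real.sqrt (∑ i, v i ^ 2 + ∑ i, w i ^ 2)

theorem stackedNorm_eq_norm_toLp {p q : ℕ} (v : Fin p → ℝ) (w : Fin q → ℝ) :
    stackedNorm v w = ‖(WithLp.toLp 2 (Sum.elim v w) : EuclideanSpace ℝ (Fin p ⊕ Fin q))‖ := by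
  rw [EuclideanSpace.norm_eq, stackedNorm, Fintype.sum_sum_type]
  simp only [Sum.elim_inl, Sum.elim_inr, Real.norm_eq_abs, sq_abs]

theorem convexOn_norm_add_smul {E : Type*} [SeminormedAddCommGroup E] [NormedSpace ℝ E]
    (u v : E) : ConvexOn ℝ Set.univ fun s : ℝ => ‖u + s • v‖ :=
  ((convexOn_norm convex_univ).translate_right u).comp_linearMap (LinearMap.toSpanSingleton ℝ E v)

theorem convexOn_stackedNorm_add_smul {p q : ℕ} (v v' : Fin p → ℝ) (w w' : Fin q → ℝ) :
    ConvexOn ℝ Set.univ fun s : ℝ => stackedNorm (v + s • v') (w + s • w') := by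
  have hsplit : ∀ s : ℝ,
      (WithLp.toLp 2 (Sum.elim (v + s • v') (w + s • w')) : EuclideanSpace ℝ (Fin p ⊕ Fin q)) =
        WithLp.toLp 2 (Sum.elim v w) + s • WithLp.toLp 2 (Sum.elim v' w') := by
    intro s
    ext (i | i) <;> simp
  simp only [stackedNorm_eq_norm_toLp, hsplit]
  exact convexOn_norm_add_smul _ _

theorem mulVec_add_smul_add {R m n : Type*} [CommSemiring R] [Fintype n] (A : Matrix m n R)
    (x y z : n → R) (s : R) :
    A *ᵥ (x + s • y + z) = A *ᵥ (x + z) + s • (A *ᵥ y) := by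
  rw [add_right_comm, mulVec_add, mulVec_smul]

theorem soc_endpoint_implies_bilinear_constraint_general
    (p q q' m : ℕ)
    (a2 a3 : Fin p → ℝ) (a4 a5 : Fin q → ℝ) (a1 : Fin m → ℝ)
    (a0 b : ℝ)
    (S1 : Matrix (Fin p) (Fin p) ℝ) (S2L : Matrix (Fin q') (Fin q) ℝ)
    (ηmax : ℝ)
    (h : Fin m → ℝ)
    (Mt Mb : Matrix (Fin p) (Fin p) ℝ)
    (Kt Kb : Matrix (Fin q) (Fin q) ℝ)
    (η : ℝ) (hη : η ∈ Set.Icc (0:ℝ) ηmax)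
    (hsoc1 : stackedNorm (S1 *ᵥ (Mtᵀ *ᵥ a2 + η • a3)) (S2L *ᵥ (Ktᵀ *ᵥ a4 + η • a5))
        ≤ a0 + a1 ⬝ᵥ h - b)
    (hsoc2 : stackedNorm (S1 *ᵥ (Mtᵀ *ᵥ a2 + ηmax • (Mbᵀ *ᵥ a2) + η • a3))
                         (S2L *ᵥ (Ktᵀ *ᵥ a4 + ηmax • (Kbᵀ *ᵥ a4) + η • a5))
        ≤ a0 + a1 ⬝ᵥ h - b) :
    stackedNorm (S1 *ᵥ (Mtᵀ *ᵥ a2 + η • (Mbᵀ *ᵥ a2) + η • a3))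
                (S2L *ᵥ (Ktᵀ *ᵥ a4 + η • (Kbᵀ *ᵥ a4) + η • a5))
      ≤ a0 + a1 ⬝ᵥ h - b := by
  have hconvex := convexOn_stackedNorm_add_smul (S1 *ᵥ (Mtᵀ *ᵥ a2 + η • a3)) (S1 *ᵥ (Mbᵀ *ᵥ a2))
    (S2L *ᵥ (Ktᵀ *ᵥ a4 + η • a5)) (S2L *ᵥ (Kbᵀ *ᵥ a4))
  have hendpoints := hconvex.le_on_segment (Set.mem_univ 0) (Set.mem_univ ηmax)
    (Icc_subset_segment hη)
  simp only [zero_smul, add_zero] at hendpoints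
  rw [mulVec_add_smul_add, mulVec_add_smul_add] at hsoc2 ⊢
  exact hendpoints.trans (max_le hsoc1 hsoc2)

theorem soc_endpoint_implies_bilinear_constraint
    (p q q' m : ℕ)
    (a2 a3 : Fin p → ℝ) (a4 a5 : Fin q → ℝ) (a1 : Fin m → ℝ)
    (a0 b : ℝ)
    (S1 : Matrix (Fin p) (Fin p) ℝ) (S2L : Matrix (Fin q') (Fin q) ℝ)
    (ηmax : ℝ) (hηmax : 0 < ηmax)
    (h : Fin m → ℝ)
    (Mt Mb : Matrix (Fin p) (Fin p) ℝ)
    (Kt Kb : Matrix (Fin q) (Fin q) ℝ)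
    (η : ℝ) (hη : η ∈ Set.Icc (0:ℝ) ηmax)
    (hsoc1 : stackedNorm (S1 *ᵥ (Mtᵀ *ᵥ a2 + η • a3)) (S2L *ᵥ (Ktᵀ *ᵥ a4 + η • a5))
        ≤ a0 + a1 ⬝ᵥ h - b)
    (hsoc2 : stackedNorm (S1 *ᵥ (Mtᵀ *ᵥ a2 + ηmax • (Mbᵀ *ᵥ a2) + η • a3))
                         (S2L *ᵥ (Ktᵀ *ᵥ a4 + ηmax • (Kbᵀ *ᵥ a4) + η • a5))
        ≤ a0 + a1 ⬝ᵥ h - b) :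
    stackedNorm (S1 *ᵥ (Mtᵀ *ᵥ a2 + η • (Mbᵀ *ᵥ a2) + η • a3))
                (S2L *ᵥ (Ktᵀ *ᵥ a4 + η • (Kbᵀ *ᵥ a4) + η • a5))
      ≤ a0 + a1 ⬝ᵥ h - b :=
  soc_endpoint_implies_bilinear_constraint_general p q q' m a2 a3 a4 a5 a1 a0 b S1 S2L ηmax h Mt Mb
    Kt Kb η hη hsoc1 hsoc2
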